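/- Let Q be a positivity preserving form with compact resolvent, λ an eigenvalue of Q with eigenfunction f, and let 𝒜 be a nest such that f± ∈ D(Q^𝒜_{F±}), where F± = {±f > 0}. Then the resolvent of the restricted form satisfies G₁^{𝒜,F⁺} f⁺ ≥ f⁺/(1+λ) and G₁^{𝒜,F⁻} f⁻ ≥ f⁻/(1+λ) almost everywhere. -/

import Mathlib

open MeasureTheory Filter Topology RealInnerProductSpace

noncomputable section

variable {X : Type*} [MeasurableSpace X]

open scoped Classical in
/-- Multiplication by the indicator function of a set `A`, as a map on `L²`. -/
def indMul {μ : Measure X} (A : Set X) (f : Lp ℝ 2 μ) : Lp ℝ 2 μ :=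
  if h : MeasurableSet A then ((Lp.memLp f).indicator h).toLp else 0

/-- A closed (nonnegative, symmetric) quadratic form in the wide sense on `L²(X,m)`:
its domain is a not necessarily dense subspace which is complete in the form norm. -/
structure WideForm (μ : Measure X) where
  dom : Submodule ℝ (Lp ℝ 2 μ)
  Q : Lp ℝ 2 μ → Lp ℝ 2 μ → ℝ
  symm : ∀ u v, Q u v = Q v u
  add_left : ∀ u v w, Q (u + v) w = Q u w + Q v w
  smul_left : ∀ (c : ℝ) u v, Q (c • u) v = c * Q u v
  nonneg : ∀ u, 0 ≤ Q u u
  closed : ∀ f : ℕ → Lp ℝ 2 μ, (∀ n, f n ∈ dom) →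
    (∀ ε > 0, ∃ N, ∀ m ≥ N, ∀ n ≥ N,
      Q (f m - f n) (f m - f n) + ‖f m - f n‖ ^ 2 < ε) →
    ∃ g ∈ dom, Tendsto (fun n => Q (f n - g) (f n - g) + ‖f n - g‖ ^ 2) atTop (nhds 0)

/-- `G` is the resolvent family of the closed form `T`. -/
def WideForm.IsResolvent {μ : Measure X} (T : WideForm μ)
    (G : ℝ → Lp ℝ 2 μ →L[ℝ] Lp ℝ 2 μ) : Prop :=
  ∀ α > 0, ∀ u, G α u ∈ T.dom ∧
    ∀ v ∈ T.dom, T.Q (G α u) v + α * ⟪G α u, v⟫ = ⟪u, v⟫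

/-- `T` is positivity preserving. -/
def WideForm.PosPres {μ : Measure X} (T : WideForm μ) : Prop :=
  ∀ u ∈ T.dom, |u| ∈ T.dom ∧ T.Q |u| |u| ≤ T.Q u u

/-- The domain of the restriction of `T` to `B` with respect to the nest `𝒜`:
the form-norm closure of the union of the domains of the restrictions to `B ∩ 𝒜 n`. -/
def NestDom {μ : Measure X} (T : WideForm μ) (𝒜 : ℕ → Set X) (B : Set X) :
    Set (Lp ℝ 2 μ) :=
  {f | f ∈ T.dom ∧ ∃ g : ℕ → Lp ℝ 2 μ,
    (∀ k, g k ∈ T.dom ∧ ∃ n, indMul (B ∩ 𝒜 n) (g k) = g k) ∧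
    Tendsto (fun k => T.Q (g k - f) (g k - f) + ‖g k - f‖ ^ 2) atTop (nhds 0)}

/-- `C` is invariant for the restriction `Q^𝒜_B` (form characterization, valid for
positivity preserving forms). -/
def NestInvariant {μ : Measure X} (T : WideForm μ) (𝒜 : ℕ → Set X) (B C : Set X) : Prop :=
  MeasurableSet C ∧ ∀ f ∈ NestDom T 𝒜 B, indMul C f ∈ NestDom T 𝒜 B ∧
    T.Q f f = T.Q (indMul C f) (indMul C f) + T.Q (f - indMul C f) (f - indMul C f)

/-- `C` is a connected component of the restriction `Q^𝒜_B`: an invariant set of positive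
measure whose restriction is irreducible. -/
def NestComponent {μ : Measure X} (T : WideForm μ) (𝒜 : ℕ → Set X) (B C : Set X) : Prop :=
  NestInvariant T 𝒜 B C ∧ 0 < μ C ∧
    ∀ D : Set X, MeasurableSet D → D ⊆ C →
      (∀ f ∈ NestDom T 𝒜 B, indMul C f = f →
        (indMul D f ∈ NestDom T 𝒜 B ∧
          T.Q f f = T.Q (indMul D f) (indMul D f)
            + T.Q (f - indMul D f) (f - indMul D f))) →
      μ D = 0 ∨ μ (C \ D) = 0

/-!
Put `w = (1 + λ) G f⁺ - f⁺ ∈ D(Q^𝒜_{F⁺})`. Testing the resolvent equation against `w⁻` and using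
that `f` is an eigenfunction gives `Q₁(w, w⁻) = -Q(f⁻, w⁻)`, which is `≥ 0` because `f⁻` and `w⁻`
are disjointly supported and a positivity preserving form satisfies `Q(a, b) ≤ 0` whenever
`a ⊓ b = 0`. On the other hand `Q₁(w, w⁻) = Q₁(w⁺, w⁻) - Q₁(w⁻, w⁻) ≤ -‖w⁻‖²`, so `w⁻ = 0`.

The test function `w⁻` is admissible because `D(Q^𝒜_B)` is stable under `u ↦ u⁺`: the positive
parts of approximants from `⋃ₙ D(Q_{B ∩ Aₙ})` are bounded in the form norm and converge in `L²`,
hence weakly in the form domain, and a closed subspace is weakly closed.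
-/

namespace WideForm

variable {μ : Measure X} (T : WideForm μ)

lemma Q_add_right (u v w : Lp ℝ 2 μ) : T.Q u (v + w) = T.Q u v + T.Q u w := by
  rw [T.symm, T.add_left, T.symm v, T.symm w]

lemma Q_neg_left (u v : Lp ℝ 2 μ) : T.Q (-u) v = -T.Q u v := by
  rw [← neg_one_smul ℝ u, T.smul_left, neg_one_mul]

lemma Q_sub_left (u v w : Lp ℝ 2 μ) : T.Q (u - v) w = T.Q u w - T.Q v w := by
  rw [sub_eq_add_neg, T.add_left, T.Q_neg_left, ← sub_eq_add_neg]

lemma Q_sub_right (u v w : Lp ℝ 2 μ) : T.Q u (v - w) = T.Q u v - T.Q u w := by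
  rw [T.symm, T.Q_sub_left, T.symm v, T.symm w]

lemma Q_add_self_sub_Q_sub_self (u v : Lp ℝ 2 μ) :
    T.Q (u + v) (u + v) - T.Q (u - v) (u - v) = 4 * T.Q u v := by
  rw [T.add_left, T.Q_add_right, T.Q_add_right, T.Q_sub_left, T.Q_sub_right, T.Q_sub_right,
    T.symm v u]
  ring

def Q1 (u v : Lp ℝ 2 μ) : ℝ := T.Q u v + ⟪u, v⟫

lemma Q1_symm (u v : Lp ℝ 2 μ) : T.Q1 u v = T.Q1 v u := by
  rw [Q1, Q1, T.symm, real_inner_comm]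

lemma Q1_add_left (u v w : Lp ℝ 2 μ) : T.Q1 (u + v) w = T.Q1 u w + T.Q1 v w := by
  rw [Q1, Q1, Q1, T.add_left, inner_add_left]; ring

lemma Q1_smul_left (c : ℝ) (u v : Lp ℝ 2 μ) : T.Q1 (c • u) v = c * T.Q1 u v := by
  rw [Q1, Q1, T.smul_left, real_inner_smul_left]; ring

lemma Q1_sub_left (u v w : Lp ℝ 2 μ) : T.Q1 (u - v) w = T.Q1 u w - T.Q1 v w := by
  rw [Q1, Q1, Q1, T.Q_sub_left, inner_sub_left]; ring

lemma Q1_self_eq (u : Lp ℝ 2 μ) : T.Q1 u u = T.Q u u + ‖u‖ ^ 2 := by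
  rw [Q1, real_inner_self_eq_norm_sq]

lemma norm_sq_le_Q1 (u : Lp ℝ 2 μ) : ‖u‖ ^ 2 ≤ T.Q1 u u := by
  rw [Q1_self_eq]; linarith [T.nonneg u]

lemma eigenvalue_nonneg {lam : ℝ} {f : Lp ℝ 2 μ} (hf : f ∈ T.dom) (hf0 : f ≠ 0)
    (heig : ∀ v ∈ T.dom, T.Q f v = lam * ⟪f, v⟫) : 0 ≤ lam := by
  have h := heig f hf
  rw [real_inner_self_eq_norm_sq] at h
  exact nonneg_of_mul_nonneg_left (h ▸ T.nonneg f) (by positivity)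

/-- A copy of `T.dom` normed by `Q₁` instead of the `L²` norm. -/
def FormDomain : Type _ := T.dom

instance : AddCommGroup T.FormDomain := inferInstanceAs (AddCommGroup T.dom)
instance : Module ℝ T.FormDomain := inferInstanceAs (Module ℝ T.dom)

def toLp : T.FormDomain →ₗ[ℝ] Lp ℝ 2 μ := T.dom.subtype

def ofLp (u : Lp ℝ 2 μ) (hu : u ∈ T.dom) : T.FormDomain := (⟨u, hu⟩ : T.dom)

@[simp] lemma toLp_ofLp (u : Lp ℝ 2 μ) (hu : u ∈ T.dom) : T.toLp (T.ofLp u hu) = u := rfl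

lemma toLp_mem (x : T.FormDomain) : T.toLp x ∈ T.dom := (show T.dom from x).2

lemma toLp_injective : Function.Injective T.toLp := Subtype.val_injective

abbrev innerCore : InnerProductSpace.Core ℝ T.FormDomain where
  inner x y := T.Q1 (T.toLp x) (T.toLp y)
  conj_inner_symm x y := T.Q1_symm _ _
  re_inner_nonneg x := (sq_nonneg _).trans (T.norm_sq_le_Q1 _)
  add_left x y z := by simp only [map_add, T.Q1_add_left]
  smul_left x y c := by simp only [map_smul, T.Q1_smul_left]; rfl
  definite x h := by
    apply T.toLp_injective
    rw [map_zero, ← norm_eq_zero, ← pow_eq_zero_iff two_ne_zero]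
    exact le_antisymm ((T.norm_sq_le_Q1 _).trans_eq h) (sq_nonneg _)

instance : NormedAddCommGroup T.FormDomain :=
  @InnerProductSpace.Core.toNormedAddCommGroup ℝ _ _ _ _ T.innerCore

instance : InnerProductSpace ℝ T.FormDomain := .ofCore T.innerCore.toCore

lemma inner_eq_Q1 (x y : T.FormDomain) : ⟪x, y⟫ = T.Q1 (T.toLp x) (T.toLp y) := rfl

lemma norm_sq_eq (x : T.FormDomain) : ‖x‖ ^ 2 = T.Q1 (T.toLp x) (T.toLp x) := by
  rw [← real_inner_self_eq_norm_sq, inner_eq_Q1]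

lemma norm_toLp_le (x : T.FormDomain) : ‖T.toLp x‖ ≤ ‖x‖ := by
  have := T.norm_sq_le_Q1 (T.toLp x)
  rw [← norm_sq_eq] at this
  exact (pow_le_pow_iff_left₀ (norm_nonneg _) (norm_nonneg _) two_ne_zero).1 this

lemma norm_ofLp_sub_sq {u v : Lp ℝ 2 μ} (hu : u ∈ T.dom) (hv : v ∈ T.dom) :
    ‖T.ofLp u hu - T.ofLp v hv‖ ^ 2 = T.Q (u - v) (u - v) + ‖u - v‖ ^ 2 := by
  rw [norm_sq_eq, map_sub, toLp_ofLp, toLp_ofLp, Q1_self_eq]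

lemma tendsto_ofLp_iff {ι : Type*} {l : Filter ι} {g : ι → Lp ℝ 2 μ} (hg : ∀ k, g k ∈ T.dom)
    {u : Lp ℝ 2 μ} (hu : u ∈ T.dom) :
    Tendsto (fun k => T.ofLp (g k) (hg k)) l (𝓝 (T.ofLp u hu)) ↔
      Tendsto (fun k => T.Q (g k - u) (g k - u) + ‖g k - u‖ ^ 2) l (𝓝 0) := by
  rw [tendsto_iff_norm_sub_tendsto_zero]
  simp_rw [← T.norm_ofLp_sub_sq (hg _) hu]
  constructor
  · intro h
    simpa using h.pow 2
  · intro h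
    simpa [Real.sqrt_sq (norm_nonneg _)] using h.sqrt

instance : CompleteSpace T.FormDomain := by
  refine Metric.complete_of_cauchySeq_tendsto fun x hx => ?_
  obtain ⟨u, hu, hlim⟩ := T.closed (fun n => T.toLp (x n)) (fun n => T.toLp_mem _) fun ε hε => by
    obtain ⟨N, hN⟩ := Metric.cauchySeq_iff.1 hx (√ε) (Real.sqrt_pos.2 hε)
    refine ⟨N, fun m hm n hn => ?_⟩
    have := hN m hm n hn
    rwa [dist_eq_norm, Real.lt_sqrt (norm_nonneg _), norm_sq_eq, map_sub, Q1_self_eq] at this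
  exact ⟨T.ofLp u hu, (T.tendsto_ofLp_iff (fun n => T.toLp_mem (x n)) hu).2 hlim⟩

lemma continuous_toLp : Continuous T.toLp :=
  AddMonoidHomClass.continuous_of_bound T.toLp 1 fun x => by simpa using T.norm_toLp_le x

end WideForm

section Hilbert

variable {E : Type*} [NormedAddCommGroup E] [InnerProductSpace ℝ E]

lemma tendsto_inner_of_isBounded_of_denseRange {ι α : Type*} {l : Filter ι} {v : ι → E}
    {x : E} (hv : Bornology.IsBounded (Set.range v)) {φ : α → E} (hφ : DenseRange φ)
    (h : ∀ a, Tendsto (fun i => ⟪v i, φ a⟫) l (𝓝 ⟪x, φ a⟫)) (z : E) :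
    Tendsto (fun i => ⟪v i, z⟫) l (𝓝 ⟪x, z⟫) := by
  obtain ⟨C, hC⟩ := isBounded_iff_forall_norm_le.1 hv
  have hequi : Equicontinuous fun i (z : E) => ⟪v i, z⟫ := by
    refine (LipschitzWith.uniformEquicontinuous _ C.toNNReal fun i => ?_).equicontinuous
    refine (innerSL ℝ (v i)).lipschitz.weaken ?_
    rw [← NNReal.coe_le_coe, coe_nnnorm, innerSL_apply_norm]
    exact (hC _ ⟨i, rfl⟩).trans (le_max_left _ _)
  have hclosed := hequi.isClosed_setOfPred_tendsto (l := l)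
    (continuous_const.inner continuous_id : Continuous fun z : E => ⟪x, z⟫)
  exact hclosed.closure_subset_iff.2 (Set.range_subset_iff.2 h) (hφ z)

lemma Submodule.mem_topologicalClosure_of_tendsto_inner [CompleteSpace E] {K : Submodule ℝ E}
    {ι : Type*} {l : Filter ι} [l.NeBot] {v : ι → E} {x : E} (hv : ∀ i, v i ∈ K)
    (h : ∀ z, Tendsto (fun i => ⟪v i, z⟫) l (𝓝 ⟪x, z⟫)) : x ∈ K.topologicalClosure := by
  rw [← Submodule.orthogonal_orthogonal_eq_closure, Submodule.mem_orthogonal']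
  intro z hz
  refine tendsto_nhds_unique (h z) ?_
  simp only [Submodule.inner_right_of_mem_orthogonal (hv _) hz, tendsto_const_nhds]

end Hilbert

namespace WideForm

variable {μ : Measure X} (T : WideForm μ) {G : ℝ → Lp ℝ 2 μ →L[ℝ] Lp ℝ 2 μ}

def resolvent₁ (hG : T.IsResolvent G) : Lp ℝ 2 μ →ₗ[ℝ] T.FormDomain :=
  LinearMap.codRestrict T.dom (G 1).toLinearMap fun y => (hG 1 one_pos y).1

lemma inner_resolvent₁ (hG : T.IsResolvent G) (y : Lp ℝ 2 μ) (w : T.FormDomain) :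
    ⟪T.resolvent₁ hG y, w⟫ = ⟪y, T.toLp w⟫ := by
  rw [inner_eq_Q1, Q1, ← (hG 1 one_pos y).2 _ (T.toLp_mem w), one_mul]
  rfl

lemma denseRange_resolvent₁ (hG : T.IsResolvent G) : DenseRange (T.resolvent₁ hG) := by
  rw [DenseRange, ← LinearMap.coe_range, Submodule.dense_iff_topologicalClosure_eq_top,
    Submodule.topologicalClosure_eq_top_iff, Submodule.eq_bot_iff]
  intro w hw
  have h := hw _ ⟨T.toLp w, rfl⟩
  rw [inner_resolvent₁, real_inner_self_eq_norm_sq, sq_eq_zero_iff, norm_eq_zero] at h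
  exact T.toLp_injective (h.trans (map_zero _).symm)

lemma mem_topologicalClosure_of_tendsto_toLp (hG : T.IsResolvent G)
    {K : Submodule ℝ T.FormDomain} {v : ℕ → T.FormDomain} {x : T.FormDomain}
    (hv : ∀ k, v k ∈ K) (hbdd : Bornology.IsBounded (Set.range v))
    (hlim : Tendsto (fun k => T.toLp (v k)) atTop (𝓝 (T.toLp x))) :
    x ∈ K.topologicalClosure := by
  refine K.mem_topologicalClosure_of_tendsto_inner (l := atTop) hv
    (tendsto_inner_of_isBounded_of_denseRange hbdd (T.denseRange_resolvent₁ hG) fun y => ?_)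
  simp only [real_inner_comm (T.resolvent₁ hG y), inner_resolvent₁]
  exact tendsto_const_nhds.inner hlim

end WideForm

namespace MeasureTheory.Lp

variable {μ : Measure X}

lemma coeFn_sup_zero (u : Lp ℝ 2 μ) : ⇑(u ⊔ 0) =ᵐ[μ] fun x => max (u x) 0 := by
  filter_upwards [Lp.coeFn_sup u 0, Lp.coeFn_zero ℝ 2 μ] with x hsup hzero
  rw [hsup, Pi.sup_apply, hzero]
  rfl

lemma inner_eq_zero_of_inf_eq_zero {u v : Lp ℝ 2 μ} (h : u ⊓ v = 0) : ⟪u, v⟫ = 0 := by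
  have hzero : ⇑(u ⊓ v) =ᵐ[μ] 0 := by
    rw [h]
    exact Lp.coeFn_zero ℝ 2 μ
  rw [L2.inner_def, ← integral_zero X ℝ]
  refine integral_congr_ae ?_
  filter_upwards [Lp.coeFn_inf u v, hzero] with x hinf hx
  have hmin : min (u x) (v x) = 0 := hinf.symm.trans hx
  rcases min_choice (u x) (v x) with h | h <;> rw [h] at hmin <;> simp [hmin]

instance instPosSMulMono : PosSMulMono ℝ (Lp ℝ 2 μ) :=
  PosSMulMono.of_smul_nonneg fun c hc u hu => by
    rw [← Lp.coeFn_nonneg] at hu ⊢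
    filter_upwards [hu, Lp.coeFn_smul c u] with x hx hsmul
    rw [hsmul, Pi.smul_apply]
    exact smul_nonneg hc hx

end MeasureTheory.Lp

section SupportedIn

variable {μ : Measure X}

variable (μ) in
def supportedIn (C : Set X) : Submodule ℝ (Lp ℝ 2 μ) where
  carrier := {u | ∀ᵐ x ∂μ, x ∉ C → u x = 0}
  zero_mem' := by
    filter_upwards [Lp.coeFn_zero ℝ 2 μ] with x hx _
    rw [hx]
    rfl
  add_mem' {u v} hu hv := by
    filter_upwards [hu, hv, Lp.coeFn_add u v] with x hux hvx hadd hx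
    rw [hadd, Pi.add_apply, hux hx, hvx hx, add_zero]
  smul_mem' c u hu := by
    filter_upwards [hu, Lp.coeFn_smul c u] with x hux hsmul hx
    rw [hsmul, Pi.smul_apply, hux hx, smul_zero]

variable {C D : Set X} {u v : Lp ℝ 2 μ}

lemma mem_supportedIn : u ∈ supportedIn μ C ↔ ∀ᵐ x ∂μ, x ∉ C → u x = 0 := Iff.rfl

lemma supportedIn_mono (h : C ⊆ D) : supportedIn μ C ≤ supportedIn μ D := fun u hu => by
  rw [mem_supportedIn] at hu ⊢
  filter_upwards [hu] with x hx hxD using hx fun hxC => hxD (h hxC)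

lemma isClosed_supportedIn (hC : MeasurableSet C) :
    IsClosed (supportedIn μ C : Set (Lp ℝ 2 μ)) := by
  convert (LpToLpRestrictCLM X ℝ ℝ μ 2 Cᶜ).isClosed_ker
  ext u
  simp only [LinearMap.mem_ker, ContinuousLinearMap.coe_coe]
  rw [Lp.eq_zero_iff_ae_eq_zero, (LpToLpRestrictCLM_coeFn ℝ Cᶜ u).congr_left, EventuallyEq,
    ae_restrict_iff' hC.compl, mem_supportedIn]
  rfl

lemma indMul_eq_self_iff (hC : MeasurableSet C) : indMul C u = u ↔ u ∈ supportedIn μ C := by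
  have hind : ⇑(indMul C u) =ᵐ[μ] C.indicator u := by
    rw [indMul, dif_pos hC]
    exact MemLp.coeFn_toLp _
  rw [mem_supportedIn]
  constructor
  · intro h
    rw [← h]
    filter_upwards [hind] with x hx hxC
    rw [hx, Set.indicator_of_notMem hxC]
  · intro h
    apply Lp.ext
    filter_upwards [hind, h] with x hx hux
    rw [hx]
    by_cases hxC : x ∈ C
    · exact Set.indicator_of_mem hxC _
    · rw [Set.indicator_of_notMem hxC, hux hxC]

lemma posPart_mem_supportedIn (hu : u ∈ supportedIn μ C) : u⁺ ∈ supportedIn μ C := by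
  filter_upwards [hu, Lp.coeFn_sup_zero u] with x hux hpos hx
  rw [posPart_def, hpos, hux hx, max_self]

lemma negPart_mem_supportedIn_compl (h : ∀ᵐ x ∂μ, x ∈ C → 0 ≤ u x) :
    u⁻ ∈ supportedIn μ Cᶜ := by
  filter_upwards [h, Lp.coeFn_sup_zero (-u), Lp.coeFn_neg u] with x hx hsup hneg hxC
  rw [negPart_def, hsup, hneg, Pi.neg_apply, max_eq_right (neg_nonpos.2 (hx (not_not.1 hxC)))]

lemma inf_eq_zero_of_mem_supportedIn_compl (hu : 0 ≤ u) (hv : 0 ≤ v)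
    (hu' : u ∈ supportedIn μ Cᶜ) (hv' : v ∈ supportedIn μ C) : u ⊓ v = 0 := by
  apply Lp.ext
  filter_upwards [Lp.coeFn_inf u v, Lp.coeFn_zero ℝ 2 μ, (Lp.coeFn_nonneg u).2 hu,
    (Lp.coeFn_nonneg v).2 hv, hu', hv'] with x hinf hzero hux hvx hux' hvx'
  rw [Pi.zero_apply] at hux hvx
  rw [hinf, hzero, Pi.inf_apply]
  by_cases hx : x ∈ C
  · simp [hux' (not_not.2 hx), hvx]
  · simp [hvx' hx, hux]

end SupportedIn

lemma posPart_eq_smul_add_abs {E : Type*} [AddCommGroup E] [Lattice E] [IsOrderedAddMonoid E]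
    [Module ℝ E] (u : E) : u⁺ = (2⁻¹ : ℝ) • (u + |u|) := by
  have h : u + |u| = (2 : ℝ) • u⁺ := by
    rw [← posPart_add_negPart, two_smul]
    nth_rewrite 1 [← posPart_sub_negPart u]
    abel
  rw [h, smul_smul, inv_mul_cancel₀ two_ne_zero, one_smul]

namespace WideForm

variable {μ : Measure X} (T : WideForm μ) {u : Lp ℝ 2 μ}

lemma posPart_mem_dom (hpp : T.PosPres) (hu : u ∈ T.dom) : u⁺ ∈ T.dom := by
  rw [posPart_eq_smul_add_abs]
  exact T.dom.smul_mem _ (T.dom.add_mem hu (hpp u hu).1)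

lemma norm_ofLp_abs_le (hpp : T.PosPres) (hu : u ∈ T.dom) :
    ‖T.ofLp |u| (hpp u hu).1‖ ≤ ‖T.ofLp u hu‖ := by
  refine (pow_le_pow_iff_left₀ (norm_nonneg _) (norm_nonneg _) two_ne_zero).1 ?_
  rw [norm_sq_eq, norm_sq_eq, toLp_ofLp, toLp_ofLp, Q1_self_eq, Q1_self_eq, norm_abs_eq_norm]
  linarith [(hpp u hu).2]

lemma norm_ofLp_posPart_le (hpp : T.PosPres) (hu : u ∈ T.dom) :
    ‖T.ofLp u⁺ (T.posPart_mem_dom hpp hu)‖ ≤ ‖T.ofLp u hu‖ := by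
  have h : T.ofLp u⁺ (T.posPart_mem_dom hpp hu) =
      (2⁻¹ : ℝ) • (T.ofLp u hu + T.ofLp |u| (hpp u hu).1) :=
    T.toLp_injective (by simp [posPart_eq_smul_add_abs])
  rw [h, norm_smul]
  have := norm_add_le (T.ofLp u hu) (T.ofLp |u| (hpp u hu).1)
  have := T.norm_ofLp_abs_le hpp hu
  norm_num
  linarith

variable (𝒜 : ℕ → Set X) (B : Set X)

/-- `⋃ₙ D(Q_{B ∩ Aₙ})`: for a nest the union is directed, so it agrees with this supremum. -/
def nestCore : Submodule ℝ T.FormDomain :=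
  ⨆ n, (supportedIn μ (B ∩ 𝒜 n)).comap T.toLp

/-- `D(Q^𝒜_B)`, see `mem_nestDom_iff`. -/
def nestSpace : Submodule ℝ T.FormDomain := (T.nestCore 𝒜 B).topologicalClosure

variable {𝒜 B}

lemma mem_nestCore_iff (hmono : Monotone 𝒜) {x : T.FormDomain} :
    x ∈ T.nestCore 𝒜 B ↔ ∃ n, T.toLp x ∈ supportedIn μ (B ∩ 𝒜 n) :=
  Submodule.mem_iSup_of_directed _ <| Monotone.directed_le fun _ _ hmn =>
    Submodule.comap_mono (supportedIn_mono (Set.inter_subset_inter_right _ (hmono hmn)))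

lemma mem_nestDom_iff (hB : MeasurableSet B) (h𝒜 : ∀ n, MeasurableSet (𝒜 n))
    (hmono : Monotone 𝒜) : u ∈ NestDom T 𝒜 B ↔ u ∈ (T.nestSpace 𝒜 B).map T.toLp := by
  have hcore : ∀ {g : Lp ℝ 2 μ} (hg : g ∈ T.dom),
      T.ofLp g hg ∈ T.nestCore 𝒜 B ↔ ∃ n, indMul (B ∩ 𝒜 n) g = g := fun hg => by
    simp only [T.mem_nestCore_iff hmono, toLp_ofLp, indMul_eq_self_iff (hB.inter (h𝒜 _))]
  constructor
  · rintro ⟨hu, g, hg, hlim⟩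
    refine ⟨T.ofLp u hu, ?_, rfl⟩
    exact (T.nestCore 𝒜 B).isClosed_topologicalClosure.mem_of_tendsto
      ((T.tendsto_ofLp_iff (fun k => (hg k).1) hu).2 hlim)
      (Eventually.of_forall fun k => (T.nestCore 𝒜 B).le_topologicalClosure
        ((hcore (hg k).1).2 (hg k).2))
  · rintro ⟨x, hx, rfl⟩
    rw [nestSpace, Submodule.topologicalClosure_coe, mem_closure_iff_seq_limit] at hx
    obtain ⟨y, hy, hlim⟩ := hx
    refine ⟨T.toLp_mem x, fun k => T.toLp (y k),
      fun k => ⟨T.toLp_mem _, (hcore (T.toLp_mem _)).1 (hy k)⟩, ?_⟩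
    exact (T.tendsto_ofLp_iff (fun k => T.toLp_mem (y k)) (T.toLp_mem x)).1 hlim

lemma mem_supportedIn_of_mem_nestDom (hB : MeasurableSet B) (h𝒜 : ∀ n, MeasurableSet (𝒜 n))
    (hmono : Monotone 𝒜) (hu : u ∈ NestDom T 𝒜 B) : u ∈ supportedIn μ B := by
  have hle : T.nestSpace 𝒜 B ≤ (supportedIn μ B).comap T.toLp :=
    Submodule.topologicalClosure_minimal _
      (iSup_le fun n => Submodule.comap_mono (supportedIn_mono Set.inter_subset_left))
      ((isClosed_supportedIn hB).preimage T.continuous_toLp)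
  obtain ⟨x, hx, rfl⟩ := (T.mem_nestDom_iff hB h𝒜 hmono).1 hu
  exact hle hx

end WideForm

namespace WideForm

variable {μ : Measure X} (T : WideForm μ) {G : ℝ → Lp ℝ 2 μ →L[ℝ] Lp ℝ 2 μ}
  {𝒜 : ℕ → Set X} {B : Set X} {u : Lp ℝ 2 μ}

lemma negPart_mem_dom (hpp : T.PosPres) (hu : u ∈ T.dom) : u⁻ ∈ T.dom := by
  rw [← posPart_neg]
  exact T.posPart_mem_dom hpp (T.dom.neg_mem hu)

lemma posPart_mem_nestDom (hpp : T.PosPres) (hG : T.IsResolvent G) (hB : MeasurableSet B)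
    (h𝒜 : ∀ n, MeasurableSet (𝒜 n)) (hmono : Monotone 𝒜) (hu : u ∈ NestDom T 𝒜 B) :
    u⁺ ∈ NestDom T 𝒜 B := by
  rw [T.mem_nestDom_iff hB h𝒜 hmono] at hu ⊢
  obtain ⟨x, hx, rfl⟩ := hu
  rw [nestSpace, Submodule.topologicalClosure_coe, mem_closure_iff_seq_limit] at hx
  obtain ⟨y, hy, hlim⟩ := hx
  set v : ℕ → T.FormDomain :=
    fun k => T.ofLp (T.toLp (y k))⁺ (T.posPart_mem_dom hpp (T.toLp_mem _))
  have hv : ∀ k, v k ∈ T.nestCore 𝒜 B := fun k => by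
    obtain ⟨n, hn⟩ := (T.mem_nestCore_iff hmono).1 (hy k)
    exact (T.mem_nestCore_iff hmono).2 ⟨n, posPart_mem_supportedIn hn⟩
  have hbdd : Bornology.IsBounded (Set.range v) := by
    obtain ⟨C, hC⟩ := isBounded_iff_forall_norm_le.1 (Metric.isBounded_range_of_tendsto y hlim)
    refine isBounded_iff_forall_norm_le.2 ⟨C, ?_⟩
    rintro _ ⟨k, rfl⟩
    exact (T.norm_ofLp_posPart_le hpp (T.toLp_mem (y k))).trans (hC _ ⟨k, rfl⟩)
  have hL2 : Tendsto (fun k => T.toLp (v k)) atTop (𝓝 (T.toLp x)⁺) :=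
    (continuous_posPart.tendsto _).comp ((T.continuous_toLp.tendsto x).comp hlim)
  exact ⟨T.ofLp (T.toLp x)⁺ (T.posPart_mem_dom hpp (T.toLp_mem x)),
    T.mem_topologicalClosure_of_tendsto_toLp hG hv hbdd hL2, rfl⟩

lemma negPart_mem_nestDom (hpp : T.PosPres) (hG : T.IsResolvent G) (hB : MeasurableSet B)
    (h𝒜 : ∀ n, MeasurableSet (𝒜 n)) (hmono : Monotone 𝒜) (hu : u ∈ NestDom T 𝒜 B) :
    u⁻ ∈ NestDom T 𝒜 B := by
  rw [← posPart_neg]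
  refine T.posPart_mem_nestDom hpp hG hB h𝒜 hmono ?_
  rw [T.mem_nestDom_iff hB h𝒜 hmono] at hu ⊢
  exact neg_mem hu

lemma Q_nonpos_of_inf_eq_zero (hpp : T.PosPres) {a b : Lp ℝ 2 μ} (hab : a ⊓ b = 0)
    (hd : a - b ∈ T.dom) : T.Q a b ≤ 0 := by
  have habs : |a - b| = a + b := by
    have h := two_nsmul_inf_eq_add_sub_abs_sub a b
    rw [hab, smul_zero, eq_comm, sub_eq_zero, abs_sub_comm] at h
    exact h.symm
  have h := (hpp _ hd).2
  rw [habs] at h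
  linarith [T.Q_add_self_sub_Q_sub_self a b]

lemma nonneg_of_Q1_negPart_nonneg (hpp : T.PosPres) (hu : u ∈ T.dom) (h : 0 ≤ T.Q1 u u⁻) :
    0 ≤ u := by
  have hsplit : T.Q1 u u⁻ = T.Q1 u⁺ u⁻ - T.Q1 u⁻ u⁻ := by
    rw [← T.Q1_sub_left, posPart_sub_negPart]
  have hdisj : T.Q1 u⁺ u⁻ ≤ 0 := by
    rw [Q1, Lp.inner_eq_zero_of_inf_eq_zero (posPart_inf_negPart_eq_zero u), add_zero]
    exact T.Q_nonpos_of_inf_eq_zero hpp (posPart_inf_negPart_eq_zero u)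
      (by rwa [posPart_sub_negPart])
  have hnorm : ‖u⁻‖ ^ 2 ≤ 0 := (T.norm_sq_le_Q1 _).trans (by linarith)
  rw [← negPart_eq_zero, ← norm_eq_zero, ← pow_eq_zero_iff two_ne_zero]
  exact le_antisymm hnorm (sq_nonneg _)

theorem one_div_one_add_smul_posPart_le (hpp : T.PosPres) (hG : T.IsResolvent G)
    (hB : MeasurableSet B) (h𝒜 : ∀ n, MeasurableSet (𝒜 n)) (hmono : Monotone 𝒜)
    {lam : ℝ} (hlam : 0 < 1 + lam) {f : Lp ℝ 2 μ} (hf : f ∈ T.dom)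
    (heig : ∀ v ∈ T.dom, T.Q f v = lam * ⟪f, v⟫) (hfm : f⁻ ∈ supportedIn μ Bᶜ)
    (hfp : f⁺ ∈ NestDom T 𝒜 B) {g : Lp ℝ 2 μ} (hg : g ∈ NestDom T 𝒜 B)
    (hgf : ∀ v ∈ NestDom T 𝒜 B, T.Q g v + ⟪g, v⟫ = ⟪f⁺, v⟫) :
    (1 / (1 + lam)) • f⁺ ≤ g := by
  set w := (1 + lam) • g - f⁺ with hw_def
  have hw : w ∈ NestDom T 𝒜 B := by
    rw [T.mem_nestDom_iff hB h𝒜 hmono] at hg hfp ⊢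
    exact sub_mem (Submodule.smul_mem _ _ hg) hfp
  have hwm : w⁻ ∈ NestDom T 𝒜 B := T.negPart_mem_nestDom hpp hG hB h𝒜 hmono hw
  have hdisj : f⁻ ⊓ w⁻ = 0 := inf_eq_zero_of_mem_supportedIn_compl (negPart_nonneg f)
    (negPart_nonneg w) hfm (T.mem_supportedIn_of_mem_nestDom hB h𝒜 hmono hwm)
  have hf_eq : f⁺ = f + f⁻ := sub_eq_iff_eq_add.1 (posPart_sub_negPart f)
  have hinner : ⟪f, w⁻⟫ = ⟪f⁺, w⁻⟫ := by
    rw [hf_eq, inner_add_left, Lp.inner_eq_zero_of_inf_eq_zero hdisj, add_zero]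
  have hQ : T.Q f⁺ w⁻ = lam * ⟪f⁺, w⁻⟫ + T.Q f⁻ w⁻ := by
    conv_lhs => rw [hf_eq]
    rw [T.add_left, heig _ hwm.1, hinner]
  have hQ1 : T.Q1 w w⁻ = -T.Q f⁻ w⁻ := by
    rw [hw_def, T.Q1_sub_left, T.Q1_smul_left, Q1, Q1, hgf _ hwm, hQ]
    ring
  have hw0 : 0 ≤ w := T.nonneg_of_Q1_negPart_nonneg hpp hw.1 <| by
    rw [hQ1, neg_nonneg]
    exact T.Q_nonpos_of_inf_eq_zero hpp hdisj (sub_mem (T.negPart_mem_dom hpp hf) hwm.1)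
  calc (1 / (1 + lam)) • f⁺ ≤ (1 / (1 + lam)) • (1 + lam) • g :=
        smul_le_smul_of_nonneg_left (sub_nonneg.1 hw0) (by positivity)
    _ = g := by rw [smul_smul, one_div_mul_cancel hlam.ne', one_smul]

end WideForm

theorem nest_resolvent_lower_bound_general {μ : Measure X} (T : WideForm μ) (hpp : T.PosPres)
    (G : ℝ → Lp ℝ 2 μ →L[ℝ] Lp ℝ 2 μ) (hG : T.IsResolvent G)
    (lam : ℝ) (f : Lp ℝ 2 μ) (hf : f ∈ T.dom) (hf0 : f ≠ 0)
    (heig : ∀ v ∈ T.dom, T.Q f v = lam * ⟪f, v⟫)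
    (𝒜 : ℕ → Set X) (hmono : Monotone 𝒜) (hmeas : ∀ n, MeasurableSet (𝒜 n))
    (hfp : f ⊔ 0 ∈ NestDom T 𝒜 {x | 0 < (f : X → ℝ) x})
    (hfm : (-f) ⊔ 0 ∈ NestDom T 𝒜 {x | (f : X → ℝ) x < 0})
    (Gp Gm : Lp ℝ 2 μ →L[ℝ] Lp ℝ 2 μ)
    (hGp : ∀ u, Gp u ∈ NestDom T 𝒜 {x | 0 < (f : X → ℝ) x} ∧
      ∀ v ∈ NestDom T 𝒜 {x | 0 < (f : X → ℝ) x}, T.Q (Gp u) v + ⟪Gp u, v⟫ = ⟪u, v⟫)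
    (hGm : ∀ u, Gm u ∈ NestDom T 𝒜 {x | (f : X → ℝ) x < 0} ∧
      ∀ v ∈ NestDom T 𝒜 {x | (f : X → ℝ) x < 0}, T.Q (Gm u) v + ⟪Gm u, v⟫ = ⟪u, v⟫) :
    (1 / (1 + lam)) • (f ⊔ 0) ≤ Gp (f ⊔ 0) ∧
      (1 / (1 + lam)) • ((-f) ⊔ 0) ≤ Gm ((-f) ⊔ 0) := by
  have hlam : 0 < 1 + lam := by linarith [T.eigenvalue_nonneg hf hf0 heig]
  have hf_meas := (Lp.stronglyMeasurable f).measurable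
  have heig_neg : ∀ v ∈ T.dom, T.Q (-f) v = lam * ⟪-f, v⟫ := fun v hv => by
    rw [T.Q_neg_left, heig v hv, inner_neg_left, mul_neg]
  refine ⟨T.one_div_one_add_smul_posPart_le hpp hG (measurableSet_lt measurable_const hf_meas)
      hmeas hmono hlam hf heig ?_ hfp (hGp _).1 (hGp _).2,
    T.one_div_one_add_smul_posPart_le hpp hG (measurableSet_lt hf_meas measurable_const)
      hmeas hmono hlam (T.dom.neg_mem hf) heig_neg ?_ hfm (hGm _).1 (hGm _).2⟩
  · exact negPart_mem_supportedIn_compl (Eventually.of_forall fun x hx => le_of_lt hx)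
  · refine negPart_mem_supportedIn_compl ?_
    filter_upwards [Lp.coeFn_neg f] with x hneg hx
    rw [hneg, Pi.neg_apply, neg_nonneg]
    exact le_of_lt hx

/-- for an eigenfunction `f` with eigenvalue `λ` whose positive/negative
parts lie in the nest-restricted domains, the resolvents of the restricted forms satisfy
`G₁^{𝒜,F±} f± ≥ f±/(1+λ)`. -/
theorem nest_resolvent_lower_bound {μ : Measure X} (T : WideForm μ) (hpp : T.PosPres)
    (hdense : Dense (T.dom : Set (Lp ℝ 2 μ)))
    (G : ℝ → Lp ℝ 2 μ →L[ℝ] Lp ℝ 2 μ) (hG : T.IsResolvent G)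
    (hcpt : ∀ α > 0, IsCompactOperator (G α))
    (lam : ℝ) (f : Lp ℝ 2 μ) (hf : f ∈ T.dom) (hf0 : f ≠ 0)
    (heig : ∀ v ∈ T.dom, T.Q f v = lam * ⟪f, v⟫)
    (𝒜 : ℕ → Set X) (hmono : Monotone 𝒜) (hmeas : ∀ n, MeasurableSet (𝒜 n))
    (hfp : f ⊔ 0 ∈ NestDom T 𝒜 {x | 0 < (f : X → ℝ) x})
    (hfm : (-f) ⊔ 0 ∈ NestDom T 𝒜 {x | (f : X → ℝ) x < 0})
    (Gp Gm : Lp ℝ 2 μ →L[ℝ] Lp ℝ 2 μ)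
    (hGp : ∀ u, Gp u ∈ NestDom T 𝒜 {x | 0 < (f : X → ℝ) x} ∧
      ∀ v ∈ NestDom T 𝒜 {x | 0 < (f : X → ℝ) x}, T.Q (Gp u) v + ⟪Gp u, v⟫ = ⟪u, v⟫)
    (hGm : ∀ u, Gm u ∈ NestDom T 𝒜 {x | (f : X → ℝ) x < 0} ∧
      ∀ v ∈ NestDom T 𝒜 {x | (f : X → ℝ) x < 0}, T.Q (Gm u) v + ⟪Gm u, v⟫ = ⟪u, v⟫) :
    (1 / (1 + lam)) • (f ⊔ 0) ≤ Gp (f ⊔ 0) ∧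
      (1 / (1 + lam)) • ((-f) ⊔ 0) ≤ Gm ((-f) ⊔ 0) :=
  nest_resolvent_lower_bound_general T hpp G hG lam f hf hf0 heig 𝒜 hmono hmeas hfp hfm Gp Gm hGp
    hGm
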